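/- Fix ν_sep > 1 and define f(ν) = ν_sep·(arcoth(ν) − arcoth(ν_sep))/ln(2) + (1/2)·log2((ν²−1)/(ν_sep²−1)) for ν ∈ (1, ν_sep]. Then f(ν_sep) = 0, f is strictly decreasing on (1, ν_sep], f(ν) > 0 for ν < ν_sep, and f(ν) → +∞ as ν → 1⁺. -/

import Mathlib

open Filter Set

/-- Inverse hyperbolic cotangent: `arcoth(x) = (1/2)·ln((x+1)/(x−1))` for `x > 1`. -/
noncomputable def arcoth (x : ℝ) : ℝ := (1 / 2) * Real.log ((x + 1) / (x - 1))

/-! With `Φ(ν) = ν_sep·arcoth ν + ½·ln(ν² − 1)` one has `f(ν) = (Φ(ν) − Φ(ν_sep)) / ln 2`, and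
`Φ'(ν) = (ν − ν_sep)/(ν² − 1)`, which is negative on `(1, ν_sep)`; so `f` decreases to its zero at
`ν_sep`. Near `ν = 1`, `Φ(ν) = ((1 + ν_sep)·ln(ν + 1) + (1 − ν_sep)·ln(ν − 1))/2`, whose second
term tends to `+∞` because `ν_sep > 1`. -/

open Real Topology

lemma hasDerivAt_arcoth {x : ℝ} (h₁ : x ≠ 1) (h₂ : x ≠ -1) :
    HasDerivAt arcoth (-(x ^ 2 - 1)⁻¹) x := by
  have hsub : x - 1 ≠ 0 := sub_ne_zero.2 h₁
  have hadd : x + 1 ≠ 0 := by rwa [← sub_neg_eq_add, sub_ne_zero]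
  have hsq : x ^ 2 - 1 ≠ 0 := sub_ne_zero.2 (by simp [h₁, h₂])
  have h := ((((hasDerivAt_id' x).add_const 1).div ((hasDerivAt_id' x).sub_const 1) hsub).log
    (div_ne_zero hadd hsub)).const_mul (1 / 2)
  refine h.congr_deriv ?_
  simp only [Pi.div_apply]
  field_simp
  ring

noncomputable def arcothPotential (s ν : ℝ) : ℝ := s * arcoth ν + log (ν ^ 2 - 1) / 2

lemma arcothPotential_eq (s : ℝ) {ν : ℝ} (h₁ : ν ≠ 1) (h₂ : ν ≠ -1) :
    arcothPotential s ν = (1 - s) / 2 * log (ν - 1) + (1 + s) / 2 * log (ν + 1) := by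
  have hsub : ν - 1 ≠ 0 := sub_ne_zero.2 h₁
  have hadd : ν + 1 ≠ 0 := by rwa [← sub_neg_eq_add, sub_ne_zero]
  rw [arcothPotential, arcoth, log_div hadd hsub, show ν ^ 2 - 1 = (ν - 1) * (ν + 1) by ring,
    log_mul hsub hadd]
  ring

lemma hasDerivAt_arcothPotential (s : ℝ) {ν : ℝ} (h₁ : ν ≠ 1) (h₂ : ν ≠ -1) :
    HasDerivAt (arcothPotential s) ((ν - s) / (ν ^ 2 - 1)) ν := by
  have hsq : ν ^ 2 - 1 ≠ 0 := sub_ne_zero.2 (by simp [h₁, h₂])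
  have h := ((hasDerivAt_arcoth h₁ h₂).const_mul s).add
    ((((hasDerivAt_pow 2 ν).sub_const 1).log hsq).div_const 2)
  refine h.congr_deriv ?_
  field_simp
  ring

lemma strictAntiOn_arcothPotential (s : ℝ) : StrictAntiOn (arcothPotential s) (Ioc 1 s) := by
  have hderiv : ∀ ν, 1 < ν → HasDerivAt (arcothPotential s) ((ν - s) / (ν ^ 2 - 1)) ν :=
    fun ν hν => hasDerivAt_arcothPotential s hν.ne' (by linarith)
  refine strictAntiOn_of_deriv_neg (convex_Ioc 1 s)
    (fun ν hν => (hderiv ν hν.1).continuousAt.continuousWithinAt) fun ν hν => ?_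
  rw [interior_Ioc] at hν
  rw [(hderiv ν hν.1).deriv]
  exact div_neg_of_neg_of_pos (by linarith [hν.2]) (by nlinarith [hν.1])

lemma tendsto_arcothPotential_nhdsGT_one {s : ℝ} (hs : 1 < s) :
    Tendsto (arcothPotential s) (𝓝[>] 1) atTop := by
  have hsub : Tendsto (· - 1) (𝓝[>] (1 : ℝ)) (𝓝[>] 0) :=
    tendsto_nhdsWithin_of_tendsto_nhds_of_eventually_within _
      (by simpa using ((continuous_sub_right (1 : ℝ)).tendsto 1).mono_left nhdsWithin_le_nhds)
      (eventually_nhdsWithin_of_forall fun ν hν => sub_pos.2 (mem_Ioi.1 hν))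
  have hadd : Tendsto (fun ν => log (ν + 1)) (𝓝[>] (1 : ℝ)) (𝓝 (log (1 + 1))) :=
    (((continuous_add_const (1 : ℝ)).tendsto 1).log (by norm_num)).mono_left nhdsWithin_le_nhds
  have hlim := ((tendsto_const_mul_atTop_of_neg (by linarith : (1 - s) / 2 < 0)).2
    (tendsto_log_nhdsGT_zero.comp hsub)).atTop_add (hadd.const_mul ((1 + s) / 2))
  refine hlim.congr' (eventually_nhdsWithin_of_forall fun ν hν => ?_)
  exact (arcothPotential_eq s (ne_of_gt hν) (by linarith [mem_Ioi.1 hν])).symm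

lemma thermal_exponent_eq_arcothPotential_sub {s ν : ℝ} (hs : s ^ 2 - 1 ≠ 0)
    (hν : ν ^ 2 - 1 ≠ 0) :
    s * (arcoth ν - arcoth s) / log 2 + 1 / 2 * logb 2 ((ν ^ 2 - 1) / (s ^ 2 - 1))
      = (arcothPotential s ν - arcothPotential s s) / log 2 := by
  rw [logb, log_div hν hs, arcothPotential, arcothPotential]
  ring

/-- Properties of the closed-form error-exponent bound for the thermal attenuator/amplifier:
with `f(ν) = ν_sep·(arcoth ν − arcoth ν_sep)/ln 2 + (1/2)·log₂((ν²−1)/(ν_sep²−1))` on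
`(1, ν_sep]`, one has `f(ν_sep) = 0`, `f` is strictly decreasing on `(1, ν_sep]`,
`f(ν) > 0` for `ν ∈ (1, ν_sep)`, and `f(ν) → +∞` as `ν → 1⁺`. -/
theorem thermal_bound_properties (νsep : ℝ) (hνsep : 1 < νsep) (f : ℝ → ℝ)
    (hf : ∀ ν, f ν = νsep * (arcoth ν - arcoth νsep) / Real.log 2
        + (1 / 2) * Real.logb 2 ((ν ^ 2 - 1) / (νsep ^ 2 - 1))) :
    f νsep = 0 ∧
    StrictAntiOn f (Set.Ioc 1 νsep) ∧
    (∀ ν ∈ Set.Ioo 1 νsep, 0 < f ν) ∧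
    Tendsto f (nhdsWithin 1 (Set.Ioi 1)) atTop := by
  set Φ := arcothPotential νsep
  have hlog2 : 0 < log 2 := log_pos one_lt_two
  have hf_eq : EqOn f (fun ν => (Φ ν - Φ νsep) / log 2) (Ioi 1) := fun ν hν => by
    rw [hf]
    exact thermal_exponent_eq_arcothPotential_sub (by nlinarith) (by nlinarith [mem_Ioi.1 hν])
  have hzero : f νsep = 0 := by simp [hf_eq hνsep]
  have hanti : StrictAntiOn f (Ioc 1 νsep) := fun a ha b hb hab => by
    rw [hf_eq ha.1, hf_eq hb.1]
    exact div_lt_div_of_pos_right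
      (sub_lt_sub_right (strictAntiOn_arcothPotential νsep ha hb hab) _) hlog2
  refine ⟨hzero, hanti, fun ν hν => ?_, ?_⟩
  · exact hzero ▸ hanti ⟨hν.1, hν.2.le⟩ (right_mem_Ioc.2 hνsep) hν.2
  · refine Tendsto.congr' (eventually_nhdsWithin_of_forall fun ν hν => (hf_eq hν).symm) ?_
    simpa only [sub_eq_add_neg] using (tendsto_atTop_add_const_right _ _
      (tendsto_arcothPotential_nhdsGT_one hνsep)).atTop_div_const hlog2
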